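/- arXiv:2205.04200 — 2 statements merged into one kernel-verified Lean document; each statement's English description precedes it below -/
import Mathlib

section
/- Suppose each f_j is σ-strongly convex (σ > 0), d(x) is the unique global minimizer of d ↦ Q(x,d), t(x) = Q(x,d(x)), and x is not a critical point of min (F_1,…,F_m). Then for any β ∈ (0,1) there exists ᾱ > 0 such that for every α ∈ (0, ᾱ] and every j = 1,…,m, F_j(x + α d(x)) ≤ F_j(x) + β α t(x). -/
/-!
Since `x` is not critical, some direction `d₀` has `F_j'(x; d₀) < 0` for every `j`. As
`Q_j(x, α d₀) / α → F_j'(x; d₀)` when `α → 0⁺`, the model is negative at `α d₀` for small `α`,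
hence `t = Q(x, d(x)) < 0`. Convexity of `g_j` bounds `g_j'(x; d)` by `g_j(x + d) - g_j(x)`, and
convexity of `f_j` makes its Hessian positive semidefinite, so
`F_j'(x; d(x)) ≤ Q_j(x, d(x)) ≤ t < β t`. A directional derivative strictly below `β t` gives
the Armijo inequality for all small steps.
-/

open Filter Topology Finset
open scoped RealInnerProductSpace

noncomputable section

/-- One-sided directional derivative: `c = F'(x; d) = lim_{α→0⁺} (F(x+αd) − F(x))/α`. -/
def HasDirDeriv {n : ℕ} (F : EuclideanSpace ℝ (Fin n) → ℝ)
    (x d : EuclideanSpace ℝ (Fin n)) (c : ℝ) : Prop :=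
  Filter.Tendsto (fun α : ℝ => (F (x + α • d) - F x) / α) (nhdsWithin 0 (Set.Ioi 0)) (nhds c)

/-- Subdifferential of a convex function: `∂h(x) = {ξ : h(y) ≥ h(x) + ⟪ξ, y − x⟫ ∀ y}`. -/
def subdiff {n : ℕ} (h : EuclideanSpace ℝ (Fin n) → ℝ) (x : EuclideanSpace ℝ (Fin n)) :
    Set (EuclideanSpace ℝ (Fin n)) :=
  {ξ | ∀ y, h x + ⟪ξ, y - x⟫ ≤ h y}

/-- `σ`-strong convexity: `f(αx+(1−α)y) ≤ αf(x)+(1−α)f(y) − (σ/2)α(1−α)‖x−y‖²`. -/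
def StronglyConvexFun {n : ℕ} (σ : ℝ) (f : EuclideanSpace ℝ (Fin n) → ℝ) : Prop :=
  ∀ x y : EuclideanSpace ℝ (Fin n), ∀ α : ℝ, 0 ≤ α → α ≤ 1 →
    f (α • x + (1 - α) • y) ≤ α * f x + (1 - α) * f y - σ / 2 * α * (1 - α) * ‖x - y‖ ^ 2

/-- `Q_j(x,d) = ∇f_j(x)ᵀd + ½ dᵀ∇²f_j(x)d + g_j(x+d) − g_j(x)`, where the Hessian is
the Fréchet derivative of the gradient. -/
def Qj {n m : ℕ} (f g : Fin (m + 1) → EuclideanSpace ℝ (Fin n) → ℝ)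
    (j : Fin (m + 1)) (x d : EuclideanSpace ℝ (Fin n)) : ℝ :=
  ⟪gradient (f j) x, d⟫ + (1 / 2) * ⟪(fderiv ℝ (gradient (f j)) x) d, d⟫
    + g j (x + d) - g j x

/-- `Q(x,d) = max_{1 ≤ j ≤ m} Q_j(x,d)`. -/
def Qmax {n m : ℕ} (f g : Fin (m + 1) → EuclideanSpace ℝ (Fin n) → ℝ)
    (x d : EuclideanSpace ℝ (Fin n)) : ℝ :=
  Finset.univ.sup' Finset.univ_nonempty (fun j => Qj f g j x d)

section Convex

variable {E : Type*} [NormedAddCommGroup E] [InnerProductSpace ℝ E]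

lemma StronglyConvexFun.convexOn {n : ℕ} {σ : ℝ} {f : EuclideanSpace ℝ (Fin n) → ℝ}
    (hf : StronglyConvexFun σ f) (hσ : 0 ≤ σ) : ConvexOn ℝ Set.univ f := by
  refine ⟨convex_univ, fun x _ y _ a b ha hb hab => ?_⟩
  obtain rfl : b = 1 - a := by linarith
  have hgap : 0 ≤ σ / 2 * a * (1 - a) * ‖x - y‖ ^ 2 := by positivity
  simp only [smul_eq_mul]
  linarith [hf x y a ha (by linarith)]

lemma ConvexOn.comp_line {g : E → ℝ} (hg : ConvexOn ℝ Set.univ g) (x d : E) :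
    ConvexOn ℝ Set.univ fun t : ℝ => g (x + t • d) :=
  (hg.translate_right x).comp_linearMap (LinearMap.toSpanSingleton ℝ E d)

lemma ConvexOn.inner_fderiv_gradient_apply_self_nonneg [CompleteSpace E] {f : E → ℝ}
    (hf : ContDiff ℝ 2 f) (hconv : ConvexOn ℝ Set.univ f) (x d : E) :
    0 ≤ ⟪fderiv ℝ (gradient f) x d, d⟫ := by
  have hline (s : ℝ) : HasDerivAt (fun t : ℝ => x + t • d) d s := by
    simpa using ((hasDerivAt_id s).smul_const d).const_add x
  have hφ (s : ℝ) : HasDerivAt (fun t => f (x + t • d)) ⟪gradient f (x + s • d), d⟫ s := by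
    rw [inner_gradient_left]
    exact ((hf.differentiable (by norm_num) _).hasFDerivAt).comp_hasDerivAt s (hline s)
  have hmono : Monotone fun s : ℝ => ⟪gradient f (x + s • d), d⟫ := by
    have := (hconv.comp_line x d).monotoneOn_deriv fun s _ => (hφ s).differentiableAt
    rwa [funext fun s => (hφ s).deriv, monotoneOn_univ] at this
  have hgrad : Differentiable ℝ (gradient f) :=
    ((InnerProductSpace.toDual ℝ E).symm.toContinuousLinearEquiv.contDiff.comp
      (hf.fderiv_right (m := 1) (by norm_num))).differentiable (by norm_num)
  have hψ : HasDerivAt (fun s : ℝ => ⟪gradient f (x + s • d), d⟫)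
      ⟪fderiv ℝ (gradient f) x d, d⟫ 0 := by
    simpa using ((hgrad _).hasFDerivAt.comp_hasDerivAt 0 (hline 0)).inner ℝ (hasDerivAt_const 0 d)
  exact hψ.nonneg_of_monotone hmono

end Convex

section DirectionalDerivative

variable {n : ℕ} {F G : EuclideanSpace ℝ (Fin n) → ℝ} {x d : EuclideanSpace ℝ (Fin n)} {a b : ℝ}

lemma DifferentiableAt.hasDirDeriv (hF : DifferentiableAt ℝ F x) (d : EuclideanSpace ℝ (Fin n)) :
    HasDirDeriv F x d ⟪gradient F x, d⟫ := by
  have hline : HasDerivAt (fun t : ℝ => x + t • d) d 0 := by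
    simpa using ((hasDerivAt_id (0 : ℝ)).smul_const d).const_add x
  have hF' : HasFDerivAt F (fderiv ℝ F x) (x + (0 : ℝ) • d) := by simpa using hF.hasFDerivAt
  have h := hasDerivAt_iff_tendsto_slope.1 (hF'.comp_hasDerivAt (0 : ℝ) hline)
  rw [← inner_gradient_left] at h
  refine (h.mono_left (nhdsWithin_mono _ fun a (ha : 0 < a) => ha.ne')).congr fun α => ?_
  simp [slope, div_eq_inv_mul]

lemma HasDirDeriv.of_add (hFG : HasDirDeriv (fun y => F y + G y) x d a)
    (hF : HasDirDeriv F x d b) : HasDirDeriv G x d (a - b) :=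
  (Tendsto.sub hFG hF).congr fun α => by ring

lemma ConvexOn.le_sub_of_hasDirDeriv (hF : ConvexOn ℝ Set.univ F) (h : HasDirDeriv F x d a) :
    a ≤ F (x + d) - F x := by
  have hderiv : HasDerivWithinAt (fun t : ℝ => F (x + t • d)) a (Set.Ioi 0) 0 := by
    rw [hasDerivWithinAt_iff_tendsto_slope' Set.self_notMem_Ioi]
    exact h.congr fun t => by simp [slope_def_field]
  simpa [slope_def_field] using
    (hF.comp_line x d).le_slope_of_hasDerivWithinAt_Ioi (Set.mem_univ 0) (Set.mem_univ 1) one_pos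
      hderiv

lemma exists_forall_le_add_of_hasDirDeriv_lt {ι : Type*} [Finite ι]
    {F : ι → EuclideanSpace ℝ (Fin n) → ℝ} {c : ι → ℝ} {r : ℝ}
    (hF : ∀ j, HasDirDeriv (F j) x d (c j)) (hc : ∀ j, c j < r) :
    ∃ abar : ℝ, 0 < abar ∧ ∀ α : ℝ, 0 < α → α ≤ abar → ∀ j, F j (x + α • d) ≤ F j x + α * r := by
  have hev : ∀ᶠ α in 𝓝[>] (0 : ℝ), ∀ j, (F j (x + α • d) - F j x) / α < r :=
    eventually_all.2 fun j => (hF j).eventually_lt_const (hc j)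
  obtain ⟨abar, habar, hsub⟩ := mem_nhdsGT_iff_exists_Ioc_subset.1 hev
  refine ⟨abar, habar, fun α hα hαle j => ?_⟩
  have := (div_lt_iff₀ hα).1 (hsub ⟨hα, hαle⟩ j)
  linarith

end DirectionalDerivative

section Model

variable {n m : ℕ} {f g : Fin (m + 1) → EuclideanSpace ℝ (Fin n) → ℝ}
  {x d : EuclideanSpace ℝ (Fin n)}

lemma Qj_le_Qmax (j : Fin (m + 1)) : Qj f g j x d ≤ Qmax f g x d :=
  Finset.le_sup' (fun j => Qj f g j x d) (Finset.mem_univ j)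

lemma tendsto_Qj_smul_div {j : Fin (m + 1)} {c : ℝ} (hg : HasDirDeriv (g j) x d c) :
    Tendsto (fun α : ℝ => Qj f g j x (α • d) / α) (𝓝[>] 0) (𝓝 (⟪gradient (f j) x, d⟫ + c)) := by
  set a := ⟪gradient (f j) x, d⟫
  set b := ⟪fderiv ℝ (gradient (f j)) x d, d⟫
  have hquad : Tendsto (fun α : ℝ => α / 2 * b) (𝓝[>] 0) (𝓝 0) := by
    have := ((tendsto_id (x := 𝓝 (0 : ℝ))).div_const 2).mul_const b
    simpa using this.mono_left nhdsWithin_le_nhds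
  have hlim := (tendsto_const_nhds (x := a)).add (hquad.add hg)
  rw [zero_add] at hlim
  refine hlim.congr' ?_
  filter_upwards [self_mem_nhdsWithin] with α (hα : (0 : ℝ) < α)
  simp only [Qj, map_smul, real_inner_smul_left, real_inner_smul_right, a, b]
  field_simp
  ring

lemma exists_Qmax_neg {c : Fin (m + 1) → ℝ} (hf : ∀ j, DifferentiableAt ℝ (f j) x)
    (hF : ∀ j, HasDirDeriv (fun y => f j y + g j y) x d (c j)) (hc : ∀ j, c j < 0) :
    ∃ d', Qmax f g x d' < 0 := by
  have hlim (j : Fin (m + 1)) :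
      Tendsto (fun α : ℝ => Qj f g j x (α • d) / α) (𝓝[>] 0) (𝓝 (c j)) := by
    simpa using tendsto_Qj_smul_div (f := f) ((hF j).of_add ((hf j).hasDirDeriv d))
  have hev : ∀ᶠ α in 𝓝[>] (0 : ℝ), 0 < α ∧ ∀ j, Qj f g j x (α • d) / α < 0 :=
    eventually_mem_nhdsWithin.and (eventually_all.2 fun j => (hlim j).eventually_lt_const (hc j))
  obtain ⟨α, hα, hneg⟩ := hev.exists
  refine ⟨α • d, (Finset.sup'_lt_iff _).2 fun j _ => ?_⟩
  simpa using (div_lt_iff₀ hα).1 (hneg j)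

lemma le_Qj_of_hasDirDeriv {j : Fin (m + 1)} {c : ℝ} (hfC2 : ContDiff ℝ 2 (f j))
    (hfconv : ConvexOn ℝ Set.univ (f j)) (hgconv : ConvexOn ℝ Set.univ (g j))
    (hF : HasDirDeriv (fun y => f j y + g j y) x d c) : c ≤ Qj f g j x d := by
  have hg := hgconv.le_sub_of_hasDirDeriv
    (hF.of_add ((hfC2.differentiable (by norm_num) x).hasDirDeriv d))
  have hH := hfconv.inner_fderiv_gradient_apply_self_nonneg hfC2 x d
  simp only [Qj]
  linarith

end Model

theorem armijo_holds_for_small_steps_general {n m : ℕ} (σ : ℝ) (hσ : 0 < σ)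
    (f g : Fin (m + 1) → EuclideanSpace ℝ (Fin n) → ℝ)
    (hfsc : ∀ j, StronglyConvexFun σ (f j))
    (hfC2 : ∀ j, ContDiff ℝ 2 (f j))
    (hgconv : ∀ j, ConvexOn ℝ Set.univ (g j))
    (x dx : EuclideanSpace ℝ (Fin n)) (t : ℝ)
    (hmin : ∀ d, Qmax f g x dx ≤ Qmax f g x d)
    (ht : t = Qmax f g x dx)
    (F' : Fin (m + 1) → EuclideanSpace ℝ (Fin n) → ℝ)
    (hF' : ∀ j d, HasDirDeriv (fun y => f j y + g j y) x d (F' j d))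
    (hnoncrit : ¬ (∀ d : EuclideanSpace ℝ (Fin n),
      0 ≤ Finset.univ.sup' Finset.univ_nonempty (fun j => F' j d)))
    (β : ℝ) (hβ1 : β < 1) :
    ∃ abar : ℝ, 0 < abar ∧ ∀ α : ℝ, 0 < α → α ≤ abar →
      ∀ j, f j (x + α • dx) + g j (x + α • dx) ≤ f j x + g j x + β * α * t := by
  obtain ⟨d₀, hd₀⟩ := not_forall.1 hnoncrit
  obtain ⟨d₁, hd₁⟩ := exists_Qmax_neg (fun j => (hfC2 j).differentiable (by norm_num) x)
    (fun j => hF' j d₀) ((Finset.sup'_lt_iff _).1 (not_le.1 hd₀) · (Finset.mem_univ _))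
  have ht_neg : t < 0 := ht ▸ (hmin d₁).trans_lt hd₁
  have hslope (j : Fin (m + 1)) : F' j dx < β * t :=
    calc F' j dx ≤ Qj f g j x dx :=
          le_Qj_of_hasDirDeriv (hfC2 j) ((hfsc j).convexOn hσ.le) (hgconv j) (hF' j dx)
      _ ≤ t := ht ▸ Qj_le_Qmax j
      _ < β * t := by nlinarith
  obtain ⟨abar, habar, hdescent⟩ :=
    exists_forall_le_add_of_hasDirDeriv_lt (fun j => hF' j dx) hslope
  exact ⟨abar, habar, fun α hα hαle j => (hdescent α hα hαle j).trans_eq (by ring)⟩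

/-- if each `f_j` is `σ`-strongly convex, `d(x)` is the unique global
minimizer of `d ↦ Q(x,d)`, `t(x) = Q(x,d(x))`, and `x` is not a critical point of
`min (F_1,…,F_m)` with `F_j = f_j + g_j`, then for any `β ∈ (0,1)` the Armijo condition
`F_j(x + α d(x)) ≤ F_j(x) + β α t(x)` holds for all sufficiently small `α > 0`. -/
theorem armijo_holds_for_small_steps {n m : ℕ} (σ : ℝ) (hσ : 0 < σ)
    (f g : Fin (m + 1) → EuclideanSpace ℝ (Fin n) → ℝ)
    (hfsc : ∀ j, StronglyConvexFun σ (f j))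
    (hfC2 : ∀ j, ContDiff ℝ 2 (f j))
    (hgconv : ∀ j, ConvexOn ℝ Set.univ (g j))
    (hgcont : ∀ j, Continuous (g j))
    (x dx : EuclideanSpace ℝ (Fin n)) (t : ℝ)
    (hmin : ∀ d, Qmax f g x dx ≤ Qmax f g x d)
    (huniq : ∀ d, (∀ d', Qmax f g x d ≤ Qmax f g x d') → d = dx)
    (ht : t = Qmax f g x dx)
    (F' : Fin (m + 1) → EuclideanSpace ℝ (Fin n) → ℝ)
    (hF' : ∀ j d, HasDirDeriv (fun y => f j y + g j y) x d (F' j d))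
    (hnoncrit : ¬ (∀ d : EuclideanSpace ℝ (Fin n),
      0 ≤ Finset.univ.sup' Finset.univ_nonempty (fun j => F' j d)))
    (β : ℝ) (hβ0 : 0 < β) (hβ1 : β < 1) :
    ∃ abar : ℝ, 0 < abar ∧ ∀ α : ℝ, 0 < α → α ≤ abar →
      ∀ j, f j (x + α • dx) + g j (x + α • dx) ≤ f j x + g j x + β * α * t :=
  armijo_holds_for_small_steps_general σ hσ f g hfsc hfC2 hgconv x dx t hmin ht F' hF' hnoncrit β
    hβ1
end
end

section
/- Let {x^k} be a sequence in ℝⁿ with x^{k+1} = x^k + α_k d^k, where d^k is the unique global minimizer of d ↦ Q(x^k,d), t^k = Q(x^k,d^k), α_k ∈ [ᾱ, 1] for a fixed ᾱ > 0, and F_j(x^{k+1}) ≤ F_j(x^k) + β α_k t^k for every j and every k, for a fixed β ∈ (0,1). If each f_j is σ-strongly convex (σ > 0) and each F_j is bounded below on the level set M = {x : F_j(x) ≤ F_j(x^0) for all j}, then Σ_{k=0}^∞ ‖d^k‖² < ∞ and in particular d^k → 0 as k → ∞. -/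
open Filter Topology Finset
open scoped RealInnerProductSpace

noncomputable section

/-!
Strong convexity of `f_j` makes each Hessian `σ`-coercive, and together with convexity of `g_j`
this gives `Q(x, α d) ≤ α Q(x, d) - α (1 - α) (σ/2) ‖d‖²` along every ray. Comparing the minimal
value `t(x) = Q(x, d(x))` with `Q(x, α d(x))` and letting `α → 1` yields `t(x) ≤ -(σ/2) ‖d(x)‖²`.
The Armijo condition then makes every `F_j(x^k)` decrease by at least `β ᾱ (σ/2) ‖d^k‖²`, and
since `F_j` is bounded below on the level set containing the iterates, these decrements are
summable.
-/

theorem le_of_forall_mem_Ioo_mul_le {a b : ℝ} (h : ∀ α ∈ Set.Ioo (0 : ℝ) 1, α * a ≤ b) :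
    a ≤ b := by
  have hlim : Tendsto (fun α : ℝ => α * a) (𝓝[<] 1) (𝓝 a) := by
    simpa using ((continuous_mul_const a).tendsto 1).mono_left nhdsWithin_le_nhds
  refine le_of_tendsto hlim ?_
  filter_upwards [Ioo_mem_nhdsLT zero_lt_one] with α hα using h α hα

theorem summable_of_le_sub_succ {a b : ℕ → ℝ} {B : ℝ} (hb : ∀ k, 0 ≤ b k)
    (hab : ∀ k, b k ≤ a k - a (k + 1)) (hB : ∀ k, B ≤ a k) : Summable b :=
  summable_of_sum_range_le hb fun N =>
    calc ∑ k ∈ range N, b k ≤ ∑ k ∈ range N, (a k - a (k + 1)) := sum_le_sum fun k _ => hab k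
      _ = a 0 - a N := sum_range_sub' a N
      _ ≤ a 0 - B := by linarith [hB N]

theorem tendsto_zero_of_summable_norm_sq {E : Type*} [SeminormedAddCommGroup E] {u : ℕ → E}
    (hu : Summable fun k => ‖u k‖ ^ 2) : Tendsto u atTop (𝓝 0) := by
  have h := hu.tendsto_atTop_zero.sqrt
  simp only [Real.sqrt_sq (norm_nonneg _), Real.sqrt_zero] at h
  exact tendsto_zero_iff_norm_tendsto_zero.2 h

theorem StrongConvexOn.le_of_hasDerivAt {φ φ' : ℝ → ℝ} {m c x : ℝ}
    (hφ : StrongConvexOn Set.univ m φ) (hφ' : ∀ t, HasDerivAt φ (φ' t) t)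
    (hc : HasDerivAt φ' c x) : m ≤ c := by
  have hconv : ConvexOn ℝ Set.univ fun t => φ t - m / 2 * t ^ 2 := by
    simpa only [Real.norm_eq_abs, sq_abs] using strongConvexOn_iff_convex.1 hφ
  have hderiv : ∀ t, HasDerivAt (fun t => φ t - m / 2 * t ^ 2) (φ' t - m * t) t := fun t =>
    ((hφ' t).sub ((hasDerivAt_pow 2 t).const_mul (m / 2))).congr_deriv (by norm_num; ring)
  have hmono : Monotone fun t => φ' t - m * t := by
    have h := hconv.monotoneOn_deriv fun t _ => (hderiv t).differentiableAt
    rw [funext fun t => (hderiv t).deriv] at h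
    exact fun s t hst => h (Set.mem_univ s) (Set.mem_univ t) hst
  have := (hc.sub ((hasDerivAt_id x).const_mul m)).nonneg_of_monotone hmono
  linarith

theorem StrongConvexOn.comp_line {E : Type*} [NormedAddCommGroup E] [NormedSpace ℝ E]
    {f : E → ℝ} {m : ℝ} (hf : StrongConvexOn Set.univ m f) (x d : E) :
    StrongConvexOn Set.univ (m * ‖d‖ ^ 2) fun t : ℝ => f (x + t • d) := by
  refine ⟨convex_univ, fun s _ r _ a b ha hb hab => ?_⟩
  obtain rfl : b = 1 - a := by linarith
  have h := hf.2 (Set.mem_univ (x + s • d)) (Set.mem_univ (x + r • d)) ha hb hab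
  rw [show a • (x + s • d) + (1 - a) • (x + r • d) = x + (a • s + (1 - a) • r) • d by module,
    show x + s • d - (x + r • d) = (s - r) • d by module, norm_smul] at h
  convert h using 3
  dsimp only
  rw [mul_pow]
  ring

theorem StrongConvexOn.mul_norm_sq_le_inner_hessian {E : Type*} [NormedAddCommGroup E]
    [InnerProductSpace ℝ E] [CompleteSpace E] {f : E → ℝ} {m : ℝ} {x : E} {H : E →L[ℝ] E}
    (hf : StrongConvexOn Set.univ m f) (hfd : Differentiable ℝ f)
    (hH : HasFDerivAt (gradient f) H x) (d : E) : m * ‖d‖ ^ 2 ≤ ⟪H d, d⟫ := by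
  have hline : ∀ t : ℝ, HasDerivAt (fun t : ℝ => x + t • d) d t := fun t => by
    simpa using ((hasDerivAt_id t).smul_const d).const_add x
  have hφ' : ∀ t : ℝ, HasDerivAt (fun t => f (x + t • d)) ⟪gradient f (x + t • d), d⟫ t :=
    fun t => by
      rw [inner_gradient_left]
      exact (hfd _).hasFDerivAt.comp_hasDerivAt t (hline t)
  have hc : HasDerivAt (fun t : ℝ => ⟪gradient f (x + t • d), d⟫) ⟪H d, d⟫ 0 := by
    have hH' : HasFDerivAt (gradient f) H (x + (0 : ℝ) • d) := by simpa using hH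
    simpa using (hH'.comp_hasDerivAt 0 (hline 0)).inner ℝ (hasDerivAt_const 0 d)
  exact (hf.comp_line x d).le_of_hasDerivAt hφ' hc

theorem ContDiff.differentiable_gradient {E : Type*} [NormedAddCommGroup E]
    [InnerProductSpace ℝ E] [CompleteSpace E] {f : E → ℝ} (hf : ContDiff ℝ 2 f) :
    Differentiable ℝ (gradient f) :=
  (InnerProductSpace.toDual ℝ E).symm.differentiable.comp
    ((hf.fderiv_right (by norm_num)).differentiable one_ne_zero)

section Subproblem

variable {n m : ℕ} {σ : ℝ} {f g : Fin (m + 1) → EuclideanSpace ℝ (Fin n) → ℝ}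
  {x d : EuclideanSpace ℝ (Fin n)} {α : ℝ}

theorem StronglyConvexFun.strongConvexOn {h : EuclideanSpace ℝ (Fin n) → ℝ}
    (hh : StronglyConvexFun σ h) : StrongConvexOn Set.univ σ h := by
  refine ⟨convex_univ, fun y _ z _ a b ha hb hab => ?_⟩
  obtain rfl : b = 1 - a := by linarith
  convert hh y z a ha (by linarith) using 1
  simp only [smul_eq_mul]
  ring

theorem Qj_smul_le {j : Fin (m + 1)} (hfsc : StronglyConvexFun σ (f j))
    (hfC2 : ContDiff ℝ 2 (f j)) (hgconv : ConvexOn ℝ Set.univ (g j))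
    (hα0 : 0 ≤ α) (hα1 : α ≤ 1) :
    Qj f g j x (α • d) ≤ α * Qj f g j x d - α * (1 - α) * (σ / 2 * ‖d‖ ^ 2) := by
  have hgray : g j (x + α • d) ≤ α * g j (x + d) + (1 - α) * g j x := by
    have h := hgconv.2 (Set.mem_univ (x + d)) (Set.mem_univ x) hα0 (sub_nonneg.2 hα1)
      (by ring)
    rwa [show α • (x + d) + (1 - α) • x = x + α • d by module, smul_eq_mul, smul_eq_mul] at h
  have hhess := hfsc.strongConvexOn.mul_norm_sq_le_inner_hessian
    (hfC2.differentiable two_ne_zero) (hfC2.differentiable_gradient x).hasFDerivAt d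
  simp only [Qj, map_smul, real_inner_smul_left, real_inner_smul_right]
  nlinarith [mul_nonneg (mul_nonneg hα0 (sub_nonneg.2 hα1)) (sub_nonneg.2 hhess)]

theorem Qmax_smul_le (hfsc : ∀ j, StronglyConvexFun σ (f j))
    (hfC2 : ∀ j, ContDiff ℝ 2 (f j)) (hgconv : ∀ j, ConvexOn ℝ Set.univ (g j))
    (hα0 : 0 ≤ α) (hα1 : α ≤ 1) :
    Qmax f g x (α • d) ≤ α * Qmax f g x d - α * (1 - α) * (σ / 2 * ‖d‖ ^ 2) :=
  sup'_le _ _ fun j _ => (Qj_smul_le (hfsc j) (hfC2 j) (hgconv j) hα0 hα1).trans <| by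
    gcongr
    exact le_sup' (fun j => Qj f g j x d) (mem_univ j)

theorem Qmax_le_neg_mul_norm_sq_of_forall_le (hfsc : ∀ j, StronglyConvexFun σ (f j))
    (hfC2 : ∀ j, ContDiff ℝ 2 (f j)) (hgconv : ∀ j, ConvexOn ℝ Set.univ (g j))
    (hmin : ∀ d', Qmax f g x d ≤ Qmax f g x d') : Qmax f g x d ≤ -(σ / 2) * ‖d‖ ^ 2 := by
  suffices σ / 2 * ‖d‖ ^ 2 ≤ -Qmax f g x d by linarith
  refine le_of_forall_mem_Ioo_mul_le fun α ⟨hα0, hα1⟩ => ?_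
  have h := (hmin (α • d)).trans (Qmax_smul_le hfsc hfC2 hgconv hα0.le hα1.le)
  nlinarith

end Subproblem

theorem sum_sq_directions_finite_general {n m : ℕ} (σ : ℝ) (hσ : 0 < σ)
    (β : ℝ) (hβ0 : 0 < β)
    (f g F : Fin (m + 1) → EuclideanSpace ℝ (Fin n) → ℝ)
    (hfsc : ∀ j, StronglyConvexFun σ (f j))
    (hfC2 : ∀ j, ContDiff ℝ 2 (f j))
    (hgconv : ∀ j, ConvexOn ℝ Set.univ (g j))
    (xseq dseq : ℕ → EuclideanSpace ℝ (Fin n)) (tseq alphaseq : ℕ → ℝ)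
    (abar : ℝ) (habar : 0 < abar)
    (hdmin : ∀ k d, Qmax f g (xseq k) (dseq k) ≤ Qmax f g (xseq k) d)
    (ht : ∀ k, tseq k = Qmax f g (xseq k) (dseq k))
    (halpha : ∀ k, abar ≤ alphaseq k ∧ alphaseq k ≤ 1)
    (harmijo : ∀ k j, F j (xseq (k + 1)) ≤ F j (xseq k) + β * alphaseq k * tseq k)
    (hbdd : ∀ j, ∃ B : ℝ, ∀ x : EuclideanSpace ℝ (Fin n),
      (∀ i, F i x ≤ F i (xseq 0)) → B ≤ F j x) :
    Summable (fun k => ‖dseq k‖ ^ 2) ∧ Tendsto dseq atTop (nhds 0) := by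
  have hdecrease :
      ∀ k j, β * abar * (σ / 2) * ‖dseq k‖ ^ 2 ≤ F j (xseq k) - F j (xseq (k + 1)) := by
    intro k j
    have htk := ht k ▸ Qmax_le_neg_mul_norm_sq_of_forall_le hfsc hfC2 hgconv (hdmin k)
    have hscaled : β * alphaseq k * tseq k ≤ β * alphaseq k * (-(σ / 2) * ‖dseq k‖ ^ 2) :=
      mul_le_mul_of_nonneg_left htk (mul_pos hβ0 (habar.trans_le (halpha k).1)).le
    have hstep_len : β * abar * (σ / 2 * ‖dseq k‖ ^ 2) ≤ β * alphaseq k * (σ / 2 * ‖dseq k‖ ^ 2) :=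
      mul_le_mul_of_nonneg_right (mul_le_mul_of_nonneg_left (halpha k).1 hβ0.le) (by positivity)
    linarith [harmijo k j]
  have hlevel : ∀ k i, F i (xseq k) ≤ F i (xseq 0) := fun k i =>
    antitone_nat_of_succ_le (f := fun k => F i (xseq k)) (fun k => by
      have : 0 ≤ β * abar * (σ / 2) * ‖dseq k‖ ^ 2 := by positivity
      linarith [hdecrease k i]) (Nat.zero_le k)
  obtain ⟨B, hB⟩ := hbdd 0
  have hsummable : Summable fun k => β * abar * (σ / 2) * ‖dseq k‖ ^ 2 :=
    summable_of_le_sub_succ (fun k => by positivity) (fun k => hdecrease k 0)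
      fun k => hB _ (hlevel k)
  have hsq := (summable_mul_left_iff (by positivity)).1 hsummable
  exact ⟨hsq, tendsto_zero_of_summable_norm_sq hsq⟩

/-- for the iteration `x^{k+1} = x^k + α_k d^k` with `d^k` the unique global
minimizer of `d ↦ Q(x^k,d)`, `t^k = Q(x^k,d^k)`, step lengths `α_k ∈ [ᾱ,1]` (`ᾱ > 0`) and
Armijo decrease `F_j(x^{k+1}) ≤ F_j(x^k) + β α_k t^k` (`β ∈ (0,1)`), if each `f_j` is
`σ`-strongly convex and each `F_j = f_j + g_j` is bounded below on the level set
`M = {x : F_j(x) ≤ F_j(x^0) ∀ j}`, then `Σ_k ‖d^k‖² < ∞`, so `d^k → 0`. -/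
theorem sum_sq_directions_finite {n m : ℕ} (σ : ℝ) (hσ : 0 < σ)
    (β : ℝ) (hβ0 : 0 < β) (hβ1 : β < 1)
    (f g F : Fin (m + 1) → EuclideanSpace ℝ (Fin n) → ℝ)
    (hfsc : ∀ j, StronglyConvexFun σ (f j))
    (hfC2 : ∀ j, ContDiff ℝ 2 (f j))
    (hgconv : ∀ j, ConvexOn ℝ Set.univ (g j))
    (hgcont : ∀ j, Continuous (g j))
    (hF : ∀ j y, F j y = f j y + g j y)
    (xseq dseq : ℕ → EuclideanSpace ℝ (Fin n)) (tseq alphaseq : ℕ → ℝ)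
    (abar : ℝ) (habar : 0 < abar)
    (hdmin : ∀ k d, Qmax f g (xseq k) (dseq k) ≤ Qmax f g (xseq k) d)
    (hduniq : ∀ k d, (∀ d', Qmax f g (xseq k) d ≤ Qmax f g (xseq k) d') → d = dseq k)
    (ht : ∀ k, tseq k = Qmax f g (xseq k) (dseq k))
    (halpha : ∀ k, abar ≤ alphaseq k ∧ alphaseq k ≤ 1)
    (hupd : ∀ k, xseq (k + 1) = xseq k + alphaseq k • dseq k)
    (harmijo : ∀ k j, F j (xseq (k + 1)) ≤ F j (xseq k) + β * alphaseq k * tseq k)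
    (hbdd : ∀ j, ∃ B : ℝ, ∀ x : EuclideanSpace ℝ (Fin n),
      (∀ i, F i x ≤ F i (xseq 0)) → B ≤ F j x) :
    Summable (fun k => ‖dseq k‖ ^ 2) ∧ Tendsto dseq atTop (nhds 0) :=
  sum_sq_directions_finite_general σ hσ β hβ0 f g F hfsc hfC2 hgconv xseq dseq tseq alphaseq abar
    habar hdmin ht halpha harmijo hbdd
end
end
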